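/- arXiv:1106.5797 — 7 statements merged into one kernel-verified Lean document; each statement's English description precedes it below -/
import Mathlib

section
/- Let G be a group isomorphic to the alternating group A_4 acting on a set X, and suppose there are distinct points v, v' ∈ X such that the set of points of X fixed simultaneously by all elements of order 2 of G is exactly {v, v'}. Then every element of G fixes both v and v'. -/
lemma A4_sq_or_cube : ∀ g : alternatingGroup (Fin 4), g ^ 2 = 1 ∨ g ^ 3 = 1 := by
  decide

/-- Let a group isomorphic to `A₄` act on a set `X`, and suppose the set of
points fixed simultaneously by all elements of order 2 is exactly `{v, v'}`
with `v ≠ v'`. Then every element of the group fixes both `v` and `v'`. -/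
theorem A4_fixes_common_pair (G : Type*) [Group G] (X : Type*) [MulAction G X]
    (hG : Nonempty (G ≃* alternatingGroup (Fin 4)))
    (v v' : X) (hvv : v ≠ v')
    (hfix : {x : X | ∀ g : G, orderOf g = 2 → g • x = x} = {v, v'}) :
    ∀ g : G, g • v = v ∧ g • v' = v' := by
  obtain ⟨e⟩ := hG
  -- v and v' are fixed by all order-2 elements
  have hv : ∀ g : G, orderOf g = 2 → g • v = v := by
    have : v ∈ {x : X | ∀ g : G, orderOf g = 2 → g • x = x} := by
      rw [hfix]; exact Set.mem_insert _ _
    exact this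
  have hv' : ∀ g : G, orderOf g = 2 → g • v' = v' := by
    have : v' ∈ {x : X | ∀ g : G, orderOf g = 2 → g • x = x} := by
      rw [hfix]; exact Set.mem_insert_of_mem _ rfl
    exact this
  -- the orbit of v (and v') under any g stays in {v, v'}
  have key : ∀ (g : G) (x : X), (∀ h : G, orderOf h = 2 → h • x = x) →
      ∀ h : G, orderOf h = 2 → h • (g • x) = g • x := by
    intro g x hx h hh
    have : (g⁻¹ * h * g) • x = x := by
      apply hx
      rw [← hh]
      exact (SemiconjBy.orderOf_eq g⁻¹ (x := h) (y := g⁻¹ * h * g) (by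
        show g⁻¹ * h = (g⁻¹ * h * g) * g⁻¹; group)).symm
    calc h • (g • x) = g • ((g⁻¹ * h * g) • x) := by
          simp [mul_smul]
      _ = g • x := by rw [this]
  intro g
  have hsq : g ^ 2 = 1 ∨ g ^ 3 = 1 := by
    rcases A4_sq_or_cube (e g) with h | h
    · left
      apply e.injective
      simpa using h
    · right
      apply e.injective
      simpa using h
  rcases hsq with h2 | h3
  · -- order divides 2
    rcases eq_or_ne g 1 with rfl | hg1
    · simp
    · have ho : orderOf g = 2 := by
        have hd := orderOf_dvd_of_pow_eq_one h2
        rcases (Nat.dvd_prime Nat.prime_two).mp hd with h | h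
        · exact absurd (orderOf_eq_one_iff.mp h) hg1
        · exact h
      exact ⟨hv g ho, hv' g ho⟩
  · -- g^3 = 1
    have hgv : g • v = v ∨ g • v = v' := by
      have : g • v ∈ {x : X | ∀ h : G, orderOf h = 2 → h • x = x} := key g v hv
      rw [hfix] at this
      exact this
    have hgv' : g • v' = v ∨ g • v' = v' := by
      have : g • v' ∈ {x : X | ∀ h : G, orderOf h = 2 → h • x = x} := key g v' hv'
      rw [hfix] at this
      exact this
    have hinj : g • v ≠ g • v' := fun h => hvv (smul_left_cancel g h)
    rcases hgv with h | h
    · refine ⟨h, ?_⟩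
      rcases hgv' with h' | h'
      · exact absurd (h.trans h'.symm) hinj
      · exact h'
    · exfalso
      have hgv'2 : g • v' = v := by
        rcases hgv' with h' | h'
        · exact h'
        · exact absurd (h.trans h'.symm) hinj
      have : g ^ 3 • v = v' := by
        rw [pow_succ, pow_two, mul_smul, mul_smul, h, hgv'2, h]
      rw [h3, one_smul] at this
      exact hvv this
end

section
/- Let G be a group isomorphic to the alternating group A_4 acting on a finite set X of cardinality n. Suppose there are natural numbers a and b such that every element of G of order 2 fixes exactly a points of X and every element of G of order 3 fixes exactly b points of X. Then 12 divides n + 3a + 8b. -/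
/-!
By Burnside's lemma, `∑ g, |fix g| = |G| · #orbits` is divisible by `|G| = 12`. Grouping the
sum by element orders, `A₄` has the identity (fixing all `n` points), three elements of order 2
and eight of order 3, so the sum is `n + 3a + 8b`.
-/

open Finset MulAction

theorem MulAction.card_dvd_sum_card_filter_smul_eq (G X : Type*) [Group G] [Fintype G]
    [Fintype X] [DecidableEq X] [MulAction G X] :
    Fintype.card G ∣ ∑ g : G, #{x : X | g • x = x} := by
  classical
  refine ⟨Fintype.card (Quotient (orbitRel G X)), ?_⟩
  rw [mul_comm, ← sum_card_fixedBy_eq_card_orbits_mul_card_group G X]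
  refine sum_congr rfl fun g _ => ?_
  rw [← Fintype.card_subtype]
  exact Fintype.card_congr' rfl

theorem MulEquiv.card_filter_orderOf_eq {G H : Type*} [Monoid G] [Monoid H] [Fintype G]
    [Fintype H] (e : G ≃* H) (d : ℕ) : #{g : G | orderOf g = d} = #{h : H | orderOf h = d} :=
  card_equiv e.toEquiv (by simp [e.orderOf_eq])

theorem orderOf_alternatingGroup_fin_four_mem (g : alternatingGroup (Fin 4)) :
    orderOf g ∈ ({1, 2, 3} : Finset ℕ) := by
  have hg : g ^ 2 = 1 ∨ g ^ 3 = 1 := by revert g; decide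
  rcases hg with hg | hg
  · rcases (Nat.dvd_prime Nat.prime_two).1 (orderOf_dvd_of_pow_eq_one hg) with h | h <;> simp [h]
  · rcases (Nat.dvd_prime Nat.prime_three).1 (orderOf_dvd_of_pow_eq_one hg) with h | h <;> simp [h]

theorem card_filter_orderOf_eq_two_alternatingGroup_fin_four :
    #{g : alternatingGroup (Fin 4) | orderOf g = 2} = 3 := by
  have := Fact.mk Nat.prime_two
  simp only [orderOf_eq_prime_iff]
  decide

theorem card_filter_orderOf_eq_three_alternatingGroup_fin_four :
    #{g : alternatingGroup (Fin 4) | orderOf g = 3} = 8 := by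
  have := Fact.mk Nat.prime_three
  simp only [orderOf_eq_prime_iff]
  decide

/-- Burnside count for an action of `A₄` on a finite set of cardinality `n`:
if each element of order 2 fixes exactly `a` points and each element of
order 3 fixes exactly `b` points, then `12 ∣ n + 3a + 8b`. -/
theorem A4_burnside (G : Type*) [Group G] (X : Type*) [Fintype X] [DecidableEq X]
    [MulAction G X]
    (hG : Nonempty (G ≃* alternatingGroup (Fin 4)))
    (n : ℕ) (hn : Fintype.card X = n) (a b : ℕ)
    (ha : ∀ g : G, orderOf g = 2 →
      (Finset.univ.filter fun x : X => g • x = x).card = a)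
    (hb : ∀ g : G, orderOf g = 3 →
      (Finset.univ.filter fun x : X => g • x = x).card = b) :
    12 ∣ n + 3 * a + 8 * b := by
  obtain ⟨e⟩ := hG
  have : Fintype G := Fintype.ofEquiv _ e.toEquiv.symm
  have hcard : Fintype.card G = 12 := by rw [Fintype.card_congr e.toEquiv]; decide
  have horder (g : G) : orderOf g ∈ ({1, 2, 3} : Finset ℕ) :=
    e.orderOf_eq g ▸ orderOf_alternatingGroup_fin_four_mem (e g)
  have hsum : ∑ g : G, #{x : X | g • x = x} = n + 3 * a + 8 * b := by
    rw [← sum_fiberwise_of_maps_to fun g _ => horder g, sum_insert (by decide),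
      sum_insert (by decide), sum_singleton, sum_const_nat fun g hg => ha g (mem_filter.1 hg).2,
      sum_const_nat fun g hg => hb g (mem_filter.1 hg).2, e.card_filter_orderOf_eq,
      e.card_filter_orderOf_eq, card_filter_orderOf_eq_two_alternatingGroup_fin_four,
      card_filter_orderOf_eq_three_alternatingGroup_fin_four]
    have hone : ({g | orderOf g = 1} : Finset G) = {1} := by ext; simp
    simp [hone, hn, add_assoc]
  exact hsum ▸ hcard ▸ card_dvd_sum_card_filter_smul_eq G X
end

section
/- Let G be a group isomorphic to the alternating group A_4 acting on a finite set X which is the disjoint union of two G-invariant subsets V and W with |V| = |W| = n. Suppose there are natural numbers a, b, b' such that a is even, every element of G of order 2 fixes exactly a points of V and no points of W, and every element of G of order 3 fixes exactly b points of V and exactly b' points of W, where either b' = b, or b' = 0 and 3 divides b. Then 4 divides a. -/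
open Finset

private lemma aux_burnside (G : Type*) [Group G] [Fintype G] (X : Type*) [Fintype X]
    [DecidableEq X] [MulAction G X] (V : Finset X)
    (hVinv : ∀ g : G, ∀ v ∈ V, g • v ∈ V) :
    Fintype.card G ∣ ∑ g : G, (V.filter fun x => g • x = x).card := by
  classical
  letI : MulAction G {x : X // x ∈ V} :=
    { smul := fun g v => ⟨g • v.1, hVinv g v.1 v.2⟩
      one_smul := fun v => Subtype.ext (one_smul G v.1)
      mul_smul := fun g h v => Subtype.ext (mul_smul g h v.1) }
  have h := MulAction.sum_card_fixedBy_eq_card_orbits_mul_card_group G {x : X // x ∈ V}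
  have hc : ∀ g : G, Fintype.card (MulAction.fixedBy {x : X // x ∈ V} g)
      = (V.filter fun x => g • x = x).card := by
    intro g
    have e : MulAction.fixedBy {x : X // x ∈ V} g ≃ (V.filter fun x => g • x = x) :=
      { toFun := fun x => ⟨x.1.1, by
          simp only [mem_filter]
          exact ⟨x.1.2, congrArg Subtype.val x.2⟩⟩
        invFun := fun y => ⟨⟨y.1, (mem_filter.mp y.2).1⟩,
          Subtype.ext (mem_filter.mp y.2).2⟩
        left_inv := fun x => by ext; rfl
        right_inv := fun y => by ext; rfl }
    rw [Fintype.card_congr e, Fintype.card_coe]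
  refine ⟨Fintype.card (Quotient (MulAction.orbitRel G {x : X // x ∈ V})), ?_⟩
  rw [mul_comm, ← h]
  exact Finset.sum_congr rfl fun g _ => (hc g).symm

/-- Let a group isomorphic to `A₄` act on a finite set which is the disjoint
union of two invariant subsets `V` and `W` of cardinality `n` each.  Suppose
`a` is even, each element of order 2 fixes exactly `a` points of `V` and no
points of `W`, and each element of order 3 fixes exactly `b` points of `V`
and `b'` points of `W`, where `b' = b`, or `b' = 0` and `3 ∣ b`.
Then `4 ∣ a`. -/
theorem A4_involution_fixed_points_div_four
    (G : Type*) [Group G] (X : Type*) [Fintype X] [DecidableEq X] [MulAction G X]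
    (hG : Nonempty (G ≃* alternatingGroup (Fin 4)))
    (V W : Finset X) (hdisj : Disjoint V W) (hunion : V ∪ W = Finset.univ)
    (hVinv : ∀ g : G, ∀ v ∈ V, g • v ∈ V)
    (hWinv : ∀ g : G, ∀ w ∈ W, g • w ∈ W)
    (n : ℕ) (hVcard : V.card = n) (hWcard : W.card = n)
    (a b b' : ℕ) (haeven : Even a)
    (haV : ∀ g : G, orderOf g = 2 → (V.filter fun x => g • x = x).card = a)
    (haW : ∀ g : G, orderOf g = 2 → (W.filter fun x => g • x = x).card = 0)
    (hbV : ∀ g : G, orderOf g = 3 → (V.filter fun x => g • x = x).card = b)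
    (hbW : ∀ g : G, orderOf g = 3 → (W.filter fun x => g • x = x).card = b')
    (hbb' : b' = b ∨ (b' = 0 ∧ 3 ∣ b)) :
    4 ∣ a := by
  classical
  obtain ⟨e⟩ := hG
  letI : Fintype G := Fintype.ofEquiv _ e.symm.toEquiv
  haveI : Fact (Nat.Prime 2) := ⟨by norm_num⟩
  haveI : Fact (Nat.Prime 3) := ⟨by norm_num⟩
  have hordA : ∀ h : alternatingGroup (Fin 4), orderOf h = 2 ↔ (h ^ 2 = 1 ∧ h ≠ 1) := by
    intro h
    constructor
    · intro ho
      refine ⟨by rw [← ho]; exact pow_orderOf_eq_one h, ?_⟩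
      rintro rfl; simp [orderOf_one] at ho
    · rintro ⟨h2, h2'⟩; exact orderOf_eq_prime h2 h2'
  have hordA3 : ∀ h : alternatingGroup (Fin 4), orderOf h = 3 ↔ (h ^ 3 = 1 ∧ h ≠ 1) := by
    intro h
    constructor
    · intro ho
      refine ⟨by rw [← ho]; exact pow_orderOf_eq_one h, ?_⟩
      rintro rfl; simp [orderOf_one] at ho
    · rintro ⟨h3, h3'⟩; exact orderOf_eq_prime h3 h3'
  have hordeq : ∀ g : G, orderOf (e g) = orderOf g :=
    orderOf_injective e.toMonoidHom e.injective
  have hcardG : Fintype.card G = 12 := by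
    rw [Fintype.card_congr e.toEquiv]; decide
  -- trichotomy of orders in G
  have horder : ∀ g : G, g = 1 ∨ orderOf g = 2 ∨ orderOf g = 3 := by
    intro g
    have hA : (e g) = 1 ∨ ((e g) ^ 2 = 1 ∧ e g ≠ 1) ∨ ((e g) ^ 3 = 1 ∧ e g ≠ 1) := by
      revert g
      intro g
      exact (by decide : ∀ h : alternatingGroup (Fin 4),
        h = 1 ∨ (h ^ 2 = 1 ∧ h ≠ 1) ∨ (h ^ 3 = 1 ∧ h ≠ 1)) (e g)
    rcases hA with h1 | h2 | h3
    · left; exact e.injective (by simpa using h1)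
    · right; left; rw [← hordeq g]; exact (hordA (e g)).mpr h2
    · right; right; rw [← hordeq g]; exact (hordA3 (e g)).mpr h3
  -- cardinalities of order classes
  have hc2 : (univ.filter fun g : G => orderOf g = 2).card = 3 := by
    rw [Finset.card_equiv (t := univ.filter fun h : alternatingGroup (Fin 4) => orderOf h = 2)
      e.toEquiv (fun g => by
      simp only [mem_filter, mem_univ, true_and]
      rw [show orderOf (e.toEquiv g) = orderOf g from hordeq g])]
    rw [Finset.filter_congr (fun h _ => hordA h)]
    decide
  have hc3 : (univ.filter fun g : G => orderOf g = 3).card = 8 := by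
    rw [Finset.card_equiv (t := univ.filter fun h : alternatingGroup (Fin 4) => orderOf h = 3)
      e.toEquiv (fun g => by
      simp only [mem_filter, mem_univ, true_and]
      rw [show orderOf (e.toEquiv g) = orderOf g from hordeq g])]
    rw [Finset.filter_congr (fun h _ => hordA3 h)]
    decide
  -- decompose univ
  set S1 : Finset G := {1} with hS1
  set S2 : Finset G := univ.filter fun g : G => orderOf g = 2 with hS2
  set S3 : Finset G := univ.filter fun g : G => orderOf g = 3 with hS3
  have hd12 : Disjoint S1 S2 := by
    simp only [hS1, hS2, Finset.disjoint_singleton_left, mem_filter]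
    simp [orderOf_one]
  have hd13 : Disjoint (S1 ∪ S2) S3 := by
    rw [Finset.disjoint_union_left]
    constructor
    · simp only [hS1, hS3, Finset.disjoint_singleton_left, mem_filter]
      simp [orderOf_one]
    · rw [Finset.disjoint_left]
      intro g hg2 hg3
      rw [hS2, mem_filter] at hg2
      rw [hS3, mem_filter] at hg3
      omega
  have huniv : S1 ∪ S2 ∪ S3 = univ := by
    ext g
    simp only [hS1, hS2, hS3, mem_union, mem_filter, mem_univ, true_and,
      mem_singleton, iff_true]
    have := horder g
    tauto
  -- the two Burnside sums
  have hsum : ∀ (U : Finset X), (∀ g : G, ∀ v ∈ U, g • v ∈ U) →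
      ∀ c0 c2 c3 : ℕ, U.card = c0 →
      (∀ g : G, orderOf g = 2 → (U.filter fun x => g • x = x).card = c2) →
      (∀ g : G, orderOf g = 3 → (U.filter fun x => g • x = x).card = c3) →
      12 ∣ c0 + 3 * c2 + 8 * c3 := by
    intro U hUinv c0 c2 c3 h0 h2 h3
    have hb := aux_burnside G X U hUinv
    rw [hcardG] at hb
    have hs : ∑ g : G, (U.filter fun x => g • x = x).card = c0 + 3 * c2 + 8 * c3 := by
      rw [← huniv, Finset.sum_union hd13, Finset.sum_union hd12]
      have e1 : ∑ g ∈ S1, (U.filter fun x => g • x = x).card = c0 := by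
        rw [hS1, Finset.sum_singleton]
        rw [show (U.filter fun x => (1 : G) • x = x) = U from
          Finset.filter_eq_self.mpr (fun x _ => one_smul G x), h0]
      have e2 : ∑ g ∈ S2, (U.filter fun x => g • x = x).card = 3 * c2 := by
        rw [Finset.sum_congr rfl (fun g hg => h2 g (mem_filter.mp hg).2),
          Finset.sum_const, hc2]; ring
      have e3 : ∑ g ∈ S3, (U.filter fun x => g • x = x).card = 8 * c3 := by
        rw [Finset.sum_congr rfl (fun g hg => h3 g (mem_filter.mp hg).2),
          Finset.sum_const, hc3]; ring
      rw [e1, e2, e3]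
    rw [hs] at hb
    exact hb
  have hVsum := hsum V hVinv n a b hVcard haV hbV
  have hWsum := hsum W hWinv n 0 b' hWcard haW hbW
  obtain ⟨k1, hk1⟩ := hVsum
  obtain ⟨k2, hk2⟩ := hWsum
  rcases hbb' with rfl | ⟨rfl, ⟨c, rfl⟩⟩ <;> omega
end

section
/- Let G be a group isomorphic to the alternating group A_4 acting on a finite set V of cardinality n. Suppose there are natural numbers a and b such that every element of G of order 2 fixes exactly a points of V, every element of G of order 3 fixes exactly b points of V, where a = 2 or 4 divides a, and b = 1 or b = 2 or 3 divides b, and it is not the case that both a = 2 and b = 1. Then n ≡ 0, 2, 4, 6, or 8 (mod 12). -/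
/-- Let a group isomorphic to `A₄` act on a finite set `V` of cardinality `n`.
Suppose each element of order 2 fixes exactly `a` points and each element of
order 3 fixes exactly `b` points, where `a = 2` or `4 ∣ a`, and `b = 1` or
`b = 2` or `3 ∣ b`, and not both `a = 2` and `b = 1`.  Then
`n ≡ 0, 2, 4, 6, or 8 (mod 12)`. -/
theorem A4_necessity (G : Type*) [Group G] (V : Type*) [Fintype V] [DecidableEq V]
    [MulAction G V]
    (hG : Nonempty (G ≃* alternatingGroup (Fin 4)))
    (n : ℕ) (hn : Fintype.card V = n) (a b : ℕ)
    (ha : ∀ g : G, orderOf g = 2 →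
      (Finset.univ.filter fun x : V => g • x = x).card = a)
    (hb : ∀ g : G, orderOf g = 3 →
      (Finset.univ.filter fun x : V => g • x = x).card = b)
    (haval : a = 2 ∨ 4 ∣ a)
    (hbval : b = 1 ∨ b = 2 ∨ 3 ∣ b)
    (hnot : ¬ (a = 2 ∧ b = 1)) :
    n % 12 = 0 ∨ n % 12 = 2 ∨ n % 12 = 4 ∨ n % 12 = 6 ∨ n % 12 = 8 := by
  classical
  obtain ⟨e⟩ := hG
  letI : Fintype G := Fintype.ofEquiv _ e.symm.toEquiv
  letI : ∀ g : G, Fintype (MulAction.fixedBy V g) := fun g => Fintype.ofFinite _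
  letI : Fintype (Quotient (MulAction.orbitRel G V)) := Fintype.ofFinite _
  have burn := MulAction.sum_card_fixedBy_eq_card_orbits_mul_card_group G V
  set k := Fintype.card (Quotient (MulAction.orbitRel G V)) with hk
  -- card of G
  have hcardG : Fintype.card G = 12 := by
    rw [Fintype.card_congr e.toEquiv]
    decide
  -- fixedBy card equals filter card
  have key : ∀ g : G, Fintype.card (MulAction.fixedBy V g)
      = (Finset.univ.filter fun x : V => g • x = x).card := by
    intro g
    rw [← Fintype.card_subtype]
    exact Fintype.card_congr (Equiv.subtypeEquivRight (fun x => Iff.rfl))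
  -- the two filter sets
  set S2 : Finset G := Finset.univ.filter (fun g : G => g ^ 2 = 1 ∧ g ≠ 1) with hS2
  set S3 : Finset G := Finset.univ.filter (fun g : G => g ^ 3 = 1 ∧ g ≠ 1) with hS3
  have hmap : ∀ (m : ℕ) (g : G), g ^ m = 1 ↔ (e g) ^ m = 1 := by
    intro m g
    rw [← map_pow, ← map_one e]
    exact ⟨fun h => by rw [h], fun h => e.injective h⟩
  have hone : ∀ g : G, g = 1 ↔ e g = 1 := by
    intro g
    rw [← map_one e]
    exact ⟨fun h => by rw [h], fun h => e.injective h⟩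
  have cardbij : ∀ m : ℕ, (Finset.univ.filter (fun g : G => g ^ m = 1 ∧ g ≠ 1)).card
      = (Finset.univ.filter (fun g : alternatingGroup (Fin 4) => g ^ m = 1 ∧ g ≠ 1)).card := by
    intro m
    refine Finset.card_bij (fun g _ => e g) ?_ ?_ ?_
    · intro g hg
      simp only [Finset.mem_filter, Finset.mem_univ, true_and] at hg ⊢
      exact ⟨(hmap m g).mp hg.1, fun h => hg.2 ((hone g).mpr h)⟩
    · intro g₁ _ g₂ _ h
      exact e.injective h
    · intro h hh
      simp only [Finset.mem_filter, Finset.mem_univ, true_and] at hh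
      refine ⟨e.symm h, Finset.mem_filter.mpr ⟨Finset.mem_univ _, ?_, ?_⟩,
        e.apply_symm_apply h⟩
      · rw [hmap m, e.apply_symm_apply]; exact hh.1
      · intro hg; exact hh.2 (by rw [← e.apply_symm_apply h, hg, map_one])
  have hS2card : S2.card = 3 := by
    rw [hS2, cardbij 2]; decide
  have hS3card : S3.card = 8 := by
    rw [hS3, cardbij 3]; decide
  -- partition
  have hcover : ∀ h : alternatingGroup (Fin 4),
      h = 1 ∨ (h ^ 2 = 1 ∧ h ≠ 1) ∨ (h ^ 3 = 1 ∧ h ≠ 1) := by decide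
  have hpart : (Finset.univ : Finset G) = insert (1 : G) (S2 ∪ S3) := by
    ext g
    simp only [Finset.mem_univ, Finset.mem_insert, Finset.mem_union, hS2, hS3,
      Finset.mem_filter, true_and, true_iff]
    rcases hcover (e g) with h | h | h
    · exact Or.inl ((hone g).mpr h)
    · exact Or.inr (Or.inl ⟨(hmap 2 g).mpr h.1, fun hg => h.2 ((hone g).mp hg)⟩)
    · exact Or.inr (Or.inr ⟨(hmap 3 g).mpr h.1, fun hg => h.2 ((hone g).mp hg)⟩)
  have h1mem : (1 : G) ∉ S2 ∪ S3 := by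
    simp [hS2, hS3]
  have hdisj : Disjoint S2 S3 := by
    rw [Finset.disjoint_left]
    intro g hg2 hg3
    simp only [hS2, hS3, Finset.mem_filter, Finset.mem_univ, true_and] at hg2 hg3
    apply hg2.2
    have : g ^ 3 = g := by
      rw [pow_succ' g 2]  -- g^3 = g * g^2
      rw [hg2.1, mul_one]
    rw [← this, hg3.1]
  -- evaluate the sum
  haveI : Fact (Nat.Prime 2) := ⟨by norm_num⟩
  haveI : Fact (Nat.Prime 3) := ⟨by norm_num⟩
  have hsum : (∑ g : G, Fintype.card (MulAction.fixedBy V g)) = n + (3 * a + 8 * b) := by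
    rw [hpart, Finset.sum_insert h1mem, Finset.sum_union hdisj]
    have e1 : Fintype.card (MulAction.fixedBy V (1 : G)) = n := by
      rw [key, ← hn]
      congr 1
      rw [Finset.filter_true_of_mem]
      intro x _
      exact one_smul G x
    have e2 : ∑ g ∈ S2, Fintype.card (MulAction.fixedBy V g) = 3 * a := by
      rw [Finset.sum_congr rfl (fun g hg => ?_), Finset.sum_const, hS2card, smul_eq_mul]
      simp only [hS2, Finset.mem_filter, Finset.mem_univ, true_and] at hg
      rw [key]
      exact ha g (orderOf_eq_prime hg.1 hg.2)
    have e3 : ∑ g ∈ S3, Fintype.card (MulAction.fixedBy V g) = 8 * b := by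
      rw [Finset.sum_congr rfl (fun g hg => ?_), Finset.sum_const, hS3card, smul_eq_mul]
      simp only [hS3, Finset.mem_filter, Finset.mem_univ, true_and] at hg
      rw [key]
      exact hb g (orderOf_eq_prime hg.1 hg.2)
    rw [e1, e2, e3]
  have final : n + (3 * a + 8 * b) = k * 12 := by
    rw [← hsum, burn, hcardG]
  omega
end

section
/- Let G be a group isomorphic to the alternating group A_5 acting on a finite set V of cardinality n. Suppose there are natural numbers a, b, c such that every element of G of order 2 fixes exactly a points of V, every element of order 3 fixes exactly b points of V, and every element of order 5 fixes exactly c points of V, where a = 2 or 4 divides a, b = 2 or 3 divides b, and c = 2 or 5 divides c. Then n ≡ 0, 2, 12, 20, 30, 32, 42, or 50 (mod 60). -/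
/-! If `g` has prime order `p`, the orbits of `⟨g⟩` on `V` have size `1` or `p`, so
`|V| ≡ |fix g| (mod p)`. By Cauchy's theorem `A₅`, of order `60`, has elements of orders `2`, `3`
and `5`, so `n ≡ a (mod 2)`, `n ≡ b (mod 3)` and `n ≡ c (mod 5)`; the restrictions on `a`, `b`,
`c` leave exactly the listed residues modulo `60`. -/

open Finset

theorem card_filter_smul_eq_modEq_card {G V : Type*} [Group G] [Fintype V] [DecidableEq V]
    [MulAction G V] {p : ℕ} (hp : p.Prime) {g : G} (hg : orderOf g = p) :
    #{x : V | g • x = x} ≡ Fintype.card V [MOD p] := by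
  have := Fact.mk hp
  have hpow : MulAction.toPermHom G V g ^ p ^ 1 = 1 := by
    rw [pow_one, ← map_pow, ← hg, pow_orderOf_eq_one, map_one]
  simpa [Equiv.Perm.support, ← Finset.filter_not] using Equiv.Perm.card_compl_support_modEq hpow

theorem modEq_card_of_forall_orderOf_eq {G V : Type*} [Group G] [Finite G] [Fintype V]
    [DecidableEq V] [MulAction G V] {p k : ℕ} (hp : p.Prime) (hpG : p ∣ Nat.card G)
    (hk : ∀ g : G, orderOf g = p → #{x : V | g • x = x} = k) :
    k ≡ Fintype.card V [MOD p] := by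
  have := Fact.mk hp
  obtain ⟨g, hg⟩ := exists_prime_orderOf_dvd_card' p hpG
  exact hk g hg ▸ card_filter_smul_eq_modEq_card hp hg

theorem nat_card_alternatingGroup_fin_five : Nat.card (alternatingGroup (Fin 5)) = 60 := by
  rw [nat_card_alternatingGroup, Nat.card_fin]
  rfl

/-- Let a group isomorphic to `A₅` act on a finite set `V` of cardinality `n`.
Suppose each element of order 2 fixes exactly `a` points, each element of
order 3 fixes exactly `b` points, and each element of order 5 fixes exactly
`c` points, where `a = 2` or `4 ∣ a`, `b = 2` or `3 ∣ b`, and `c = 2` or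
`5 ∣ c`.  Then `n ≡ 0, 2, 12, 20, 30, 32, 42, or 50 (mod 60)`. -/
theorem A5_necessity (G : Type*) [Group G] (V : Type*) [Fintype V] [DecidableEq V]
    [MulAction G V]
    (hG : Nonempty (G ≃* alternatingGroup (Fin 5)))
    (n : ℕ) (hn : Fintype.card V = n) (a b c : ℕ)
    (ha : ∀ g : G, orderOf g = 2 →
      (Finset.univ.filter fun x : V => g • x = x).card = a)
    (hb : ∀ g : G, orderOf g = 3 →
      (Finset.univ.filter fun x : V => g • x = x).card = b)
    (hc : ∀ g : G, orderOf g = 5 →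
      (Finset.univ.filter fun x : V => g • x = x).card = c)
    (haval : a = 2 ∨ 4 ∣ a)
    (hbval : b = 2 ∨ 3 ∣ b)
    (hcval : c = 2 ∨ 5 ∣ c) :
    n % 60 = 0 ∨ n % 60 = 2 ∨ n % 60 = 12 ∨ n % 60 = 20 ∨
      n % 60 = 30 ∨ n % 60 = 32 ∨ n % 60 = 42 ∨ n % 60 = 50 := by
  obtain ⟨e⟩ := hG
  have : Finite G := Finite.of_equiv _ e.symm.toEquiv
  have hcard : Nat.card G = 60 :=
    (Nat.card_congr e.toEquiv).trans nat_card_alternatingGroup_fin_five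
  have h2 : a ≡ n [MOD 2] :=
    hn ▸ modEq_card_of_forall_orderOf_eq Nat.prime_two (by rw [hcard]; norm_num) ha
  have h3 : b ≡ n [MOD 3] :=
    hn ▸ modEq_card_of_forall_orderOf_eq Nat.prime_three (by rw [hcard]; norm_num) hb
  have h5 : c ≡ n [MOD 5] :=
    hn ▸ modEq_card_of_forall_orderOf_eq Nat.prime_five (by rw [hcard]; norm_num) hc
  unfold Nat.ModEq at h2 h3 h5
  rcases haval with rfl | ⟨k, rfl⟩ <;> rcases hbval with rfl | ⟨l, rfl⟩ <;>
    rcases hcval with rfl | ⟨m, rfl⟩ <;> omega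
end

section
/- There is no action of a group isomorphic to the alternating group A_5 on a finite set X such that every element of order 3 fixes exactly one point of X, while every element of order 2 and every element of order 5 fixes no point of X. -/
private lemma aux_orderOf_map {G H : Type*} [Group G] [Group H] (e : G ≃* H) (a : G) :
    orderOf (e a) = orderOf a :=
  orderOf_injective e.toMonoidHom e.injective a

/-- There is no action of a group isomorphic to `A₅` on a finite set such that
every element of order 3 fixes exactly one point, while every element of
order 2 and every element of order 5 fixes no point. -/
theorem no_A5_action_with_unique_order_three_fixed_point
    (G : Type*) [Group G] (X : Type*) [Fintype X] [MulAction G X]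
    (hG : Nonempty (G ≃* alternatingGroup (Fin 5))) :
    ¬ ((∀ g : G, orderOf g = 3 → ∃! x : X, g • x = x) ∧
       (∀ g : G, orderOf g = 2 → ∀ x : X, g • x ≠ x) ∧
       (∀ g : G, orderOf g = 5 → ∀ x : X, g • x ≠ x)) := by
  rintro ⟨h3, h2, _⟩
  obtain ⟨φ⟩ := hG
  -- c = (0 1 2), t = (0 1)(3 4)
  have hc : Equiv.Perm.sign (Equiv.swap (0:Fin 5) 1 * Equiv.swap 1 2) = 1 := by decide
  have ht : Equiv.Perm.sign (Equiv.swap (0:Fin 5) 1 * Equiv.swap 3 4) = 1 := by decide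
  set c : alternatingGroup (Fin 5) := ⟨_, hc⟩ with hcdef
  set t : alternatingGroup (Fin 5) := ⟨_, ht⟩ with htdef
  set g : G := φ.symm c with hgdef
  set n : G := φ.symm t with hndef
  have hg3 : orderOf g = 3 := by
    rw [hgdef, aux_orderOf_map]
    apply orderOf_eq_prime
    · exact Subtype.ext (by decide : (Equiv.swap (0:Fin 5) 1 * Equiv.swap 1 2) ^ 3 = 1)
    · exact fun h => absurd (congrArg Subtype.val h)
        (by decide : ¬ (Equiv.swap (0:Fin 5) 1 * Equiv.swap 1 2 = 1))
  have hn2 : orderOf n = 2 := by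
    rw [hndef, aux_orderOf_map]
    apply orderOf_eq_prime
    · exact Subtype.ext (by decide : (Equiv.swap (0:Fin 5) 1 * Equiv.swap 3 4) ^ 2 = 1)
    · exact fun h => absurd (congrArg Subtype.val h)
        (by decide : ¬ (Equiv.swap (0:Fin 5) 1 * Equiv.swap 3 4 = 1))
  have hrel : t * c * t⁻¹ = c⁻¹ := Subtype.ext
    (by decide : (Equiv.swap (0:Fin 5) 1 * Equiv.swap 3 4) * (Equiv.swap 0 1 * Equiv.swap 1 2) *
      (Equiv.swap 0 1 * Equiv.swap 3 4)⁻¹ = (Equiv.swap 0 1 * Equiv.swap 1 2)⁻¹)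
  have hrelG : n * g * n⁻¹ = g⁻¹ := by
    rw [hgdef, hndef, ← map_inv, ← map_mul, ← map_mul, ← map_inv, hrel]
  -- hence g * n = n * g⁻¹
  have hgn : g * n = n * g⁻¹ := by
    have := congrArg (·⁻¹) hrelG
    simp only [mul_inv_rev, inv_inv, ← mul_assoc] at this
    exact (mul_inv_eq_iff_eq_mul.mp this).symm
  obtain ⟨x, hx, hxu⟩ := h3 g hg3
  have hfix : g • (n • x) = n • x := by
    rw [smul_smul, hgn, mul_smul]
    congr 1
    rw [inv_smul_eq_iff, hx]
  exact h2 n hn2 x (hxu (n • x) hfix)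
end

section
/- Let g be an element of order 3 in the alternating group A_5, and let H_1, H_2, H_3 be subgroups of A_5, each isomorphic to the alternating group A_4 and each containing g. Then at least two of the subgroups H_1, H_2, H_3 are equal; that is, no element of order 3 in A_5 lies in three distinct subgroups isomorphic to A_4. -/
open Equiv Finset

set_option maxHeartbeats 1000000 in
private lemma lem1 : ∀ x y : alternatingGroup (Fin 4), x^2 = 1 → y^2 = 1 → (x*y)^2 = 1 := by
  decide

set_option maxHeartbeats 1000000 in
private lemma lem2 : Fintype.card {y : alternatingGroup (Fin 4) // y^2 = 1} = 4 := by decide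

set_option maxHeartbeats 1000000 in
private lemma lemA4 : Fintype.card (alternatingGroup (Fin 4)) = 12 := by decide

set_option maxHeartbeats 2000000 in
set_option maxRecDepth 10000 in
private lemma lem3 : ∀ σ : Perm (Fin 5), σ^3 = 1 → σ ≠ 1 → ∀ p q r : Fin 5, p ≠ q → p ≠ r →
    q ≠ r → σ p = p → σ q = q → σ r = r → False := by decide

/-- the set of even involutions fixing `p` -/
private def S (p : Fin 5) : Finset (Perm (Fin 5)) :=
  Finset.univ.filter (fun x : Perm (Fin 5) => x^2 = 1 ∧ x ≠ 1 ∧ Perm.sign x = 1 ∧ x p = p)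

set_option maxHeartbeats 2000000 in
set_option maxRecDepth 10000 in
private lemma lem5 : ∀ p : Fin 5, (S p).card = 3 := by decide

set_option maxHeartbeats 4000000 in
set_option maxRecDepth 10000 in
private lemma lem4 : ∀ a b : Perm (Fin 5), Perm.sign a = 1 → Perm.sign b = 1 → a^2 = 1 →
    b^2 = 1 → a ≠ 1 → b ≠ 1 → a ≠ b → (a*b)^2 = 1 →
    ∃ p : Fin 5, (a p = p ∧ b p = p) ∧ ∀ q : Fin 5, (a q = q ∧ b q = q) → q = p := by decide

set_option maxHeartbeats 1000000 in
set_option synthInstance.maxHeartbeats 200000 in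
private lemma keyAux (g : alternatingGroup (Fin 5)) (hg : orderOf g = 3)
    (H : Subgroup (alternatingGroup (Fin 5))) (e : H ≃* alternatingGroup (Fin 4))
    (hgH : g ∈ H) :
    ∃ (p : Fin 5) (V : Subgroup (alternatingGroup (Fin 5))),
      (g : Perm (Fin 5)) p = p ∧
      (∀ x : alternatingGroup (Fin 5), x ∈ V ↔ (x = 1 ∨ (x : Perm (Fin 5)) ∈ S p)) ∧
      H = Subgroup.zpowers g ⊔ V := by
  classical
  -- the "Klein" subgroup of H
  have hsq : ∀ (x : alternatingGroup (Fin 5)) (hx : x ∈ H), x^2 = 1 → (⟨x, hx⟩ : H)^2 = 1 := by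
    intro x hx h2
    exact Subtype.ext (by simp [h2])
  set V : Subgroup (alternatingGroup (Fin 5)) :=
    { carrier := {x | x ∈ H ∧ x^2 = 1}
      one_mem' := ⟨H.one_mem, one_pow 2⟩
      mul_mem' := by
        rintro x y ⟨hxH, hx2⟩ ⟨hyH, hy2⟩
        refine ⟨H.mul_mem hxH hyH, ?_⟩
        have h1 : (e ⟨x, hxH⟩)^2 = 1 := by rw [← map_pow, hsq x hxH hx2, map_one]
        have h2 : (e ⟨y, hyH⟩)^2 = 1 := by rw [← map_pow, hsq y hyH hy2, map_one]
        have h3 := lem1 _ _ h1 h2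
        rw [← map_mul, ← map_pow] at h3
        have h4 : (⟨x, hxH⟩ * ⟨y, hyH⟩ : H)^2 = 1 := by
          rwa [← map_one e, (MulEquiv.injective e).eq_iff] at h3
        simpa using congrArg Subtype.val h4
      inv_mem' := by
        rintro x ⟨hxH, hx2⟩
        exact ⟨H.inv_mem hxH, by rw [inv_pow, hx2, inv_one]⟩ } with hVdef
  have hmemV : ∀ x : alternatingGroup (Fin 5), x ∈ V ↔ x ∈ H ∧ x^2 = 1 := fun x => Iff.rfl
  -- card V = 4
  have hcardV : Nat.card V = 4 := by
    have : Nat.card {y : alternatingGroup (Fin 4) // y^2 = 1} = 4 := by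
      rw [Nat.card_eq_fintype_card, lem2]
    rw [← this]
    apply Nat.card_congr
    refine ⟨fun x => ⟨e ⟨x.1, x.2.1⟩, ?_⟩, fun y => ⟨(e.symm y.1 : alternatingGroup (Fin 5)),
      (e.symm y.1).2, ?_⟩, ?_, ?_⟩
    · rw [← map_pow, hsq x.1 x.2.1 x.2.2, map_one]
    · have h1 : (e.symm y.1)^2 = 1 := by rw [← map_pow, y.2, map_one]
      simpa using congrArg Subtype.val h1
    · rintro ⟨x, hxH, hx2⟩
      simp
    · rintro ⟨y, hy2⟩
      simp
  -- pick two distinct nontrivial elements of V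
  haveI : Fintype V := Fintype.ofFinite V
  have hcard' : Fintype.card V = 4 := by rw [← Nat.card_eq_fintype_card, hcardV]
  have herase : 1 < (Finset.univ.erase (1 : V)).card := by
    rw [Finset.card_erase_of_mem (Finset.mem_univ _), Finset.card_univ, hcard']
    norm_num
  obtain ⟨a', ha's, b', hb's, hab'⟩ := Finset.one_lt_card.mp herase
  obtain ⟨ha'1, -⟩ := Finset.mem_erase.mp ha's
  obtain ⟨hb'1, -⟩ := Finset.mem_erase.mp hb's
  have ha'sq : a' ^ 2 = 1 := Subtype.ext (by simp [a'.2.2])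
  have haa : a' * a' = 1 := by rw [← pow_two, ha'sq]
  have haba' : a' * b' ≠ a' := fun h => hb'1 (mul_left_cancel (h.trans (mul_one a').symm))
  have habb' : a' * b' ≠ b' := fun h => ha'1 (mul_right_cancel (h.trans (one_mul b').symm))
  have hab'ne1 : a' * b' ≠ 1 := fun h => hab' (mul_left_cancel (h.trans haa.symm)).symm
  -- classification of elements of V
  have hx4 : ∀ x : V, x = 1 ∨ x = a' ∨ x = b' ∨ x = a' * b' := by
    intro x
    by_contra hcon
    push_neg at hcon
    obtain ⟨h1, h2, h3, h4⟩ := hcon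
    have h5 : ({x, 1, a', b', a' * b'} : Finset V).card = 5 := by
      rw [Finset.card_insert_of_notMem (by simp [h1, h2, h3, h4]),
          Finset.card_insert_of_notMem
            (by simp [Ne.symm ha'1, Ne.symm hb'1, Ne.symm hab'ne1]),
          Finset.card_insert_of_notMem (by simp [hab', Ne.symm haba']),
          Finset.card_insert_of_notMem (by simp [Ne.symm habb']),
          Finset.card_singleton]
    have h6 := Finset.card_le_card (Finset.subset_univ ({x, 1, a', b', a' * b'} : Finset V))
    rw [h5, Finset.card_univ, hcard'] at h6
    omega
  -- pass to the underlying elements of A5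
  set a : alternatingGroup (Fin 5) := (a' : alternatingGroup (Fin 5)) with hadef
  set b : alternatingGroup (Fin 5) := (b' : alternatingGroup (Fin 5)) with hbdef
  have haV : a ∈ V := a'.2
  have hbV : b ∈ V := b'.2
  have habV : a * b ∈ V := V.mul_mem haV hbV
  have ha1 : a ≠ 1 := fun h => ha'1 (Subtype.ext h)
  have hb1 : b ≠ 1 := fun h => hb'1 (Subtype.ext h)
  have habne : a ≠ b := fun h => hab' (Subtype.ext h)
  have hab1 : a * b ≠ 1 := fun h => hab'ne1 (Subtype.ext h)
  have habna : a * b ≠ a := fun h => haba' (Subtype.ext h)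
  have habnb : a * b ≠ b := fun h => habb' (Subtype.ext h)
  have hclass : ∀ x : alternatingGroup (Fin 5), x ∈ V →
      x = 1 ∨ x = a ∨ x = b ∨ x = a * b := by
    intro x hx
    rcases hx4 ⟨x, hx⟩ with h | h | h | h
    · exact Or.inl (congrArg Subtype.val h)
    · exact Or.inr (Or.inl (congrArg Subtype.val h))
    · exact Or.inr (Or.inr (Or.inl (congrArg Subtype.val h)))
    · exact Or.inr (Or.inr (Or.inr (congrArg Subtype.val h)))
  -- the underlying permutations
  set aP : Perm (Fin 5) := (a : Perm (Fin 5)) with haPdef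
  set bP : Perm (Fin 5) := (b : Perm (Fin 5)) with hbPdef
  have hcoe_mul : ((a * b : alternatingGroup (Fin 5)) : Perm (Fin 5)) = aP * bP := rfl
  have haP2 : aP ^ 2 = 1 := by simpa using congrArg Subtype.val haV.2
  have hbP2 : bP ^ 2 = 1 := by simpa using congrArg Subtype.val hbV.2
  have habP2 : (aP * bP) ^ 2 = 1 := by
    have := congrArg Subtype.val habV.2
    simpa [hcoe_mul] using this
  have haPne : aP ≠ 1 := fun h => ha1 (Subtype.ext h)
  have hbPne : bP ≠ 1 := fun h => hb1 (Subtype.ext h)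
  have habPne1 : aP * bP ≠ 1 := fun h => hab1 (Subtype.ext h)
  have habPne : aP ≠ bP := fun h => habne (Subtype.ext h)
  have hsa : Perm.sign aP = 1 := Equiv.Perm.mem_alternatingGroup.mp a.2
  have hsb : Perm.sign bP = 1 := Equiv.Perm.mem_alternatingGroup.mp b.2
  obtain ⟨p, ⟨hap, hbp⟩, huniq⟩ := lem4 aP bP hsa hsb haP2 hbP2 haPne hbPne habPne habP2
  -- all elements of V fix p
  have fixV : ∀ x : alternatingGroup (Fin 5), x ∈ V → (x : Perm (Fin 5)) p = p := by
    intro x hx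
    rcases hclass x hx with h | h | h | h <;> subst h
    · simp
    · exact hap
    · exact hbp
    · rw [hcoe_mul, Perm.mul_apply, hbp, hap]
  -- g fixes p
  have hconj : ∀ x, x ∈ V → g⁻¹ * x * g ∈ V := by
    rintro x ⟨hxH, hx2⟩
    refine ⟨H.mul_mem (H.mul_mem (H.inv_mem hgH) hxH) hgH, ?_⟩
    have h : (g⁻¹ * x * g) ^ 2 = g⁻¹ * x ^ 2 * g := by
      rw [pow_two, pow_two]
      simp [mul_assoc]
    rw [h, hx2, mul_one, inv_mul_cancel]
  have hgfix : ∀ x, x ∈ V →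
      (x : Perm (Fin 5)) ((g : Perm (Fin 5)) p) = (g : Perm (Fin 5)) p := by
    intro x hx
    have h1 := fixV _ (hconj x hx)
    have h2 : ((g⁻¹ * x * g : alternatingGroup (Fin 5)) : Perm (Fin 5)) p =
        (g : Perm (Fin 5))⁻¹ ((x : Perm (Fin 5)) ((g : Perm (Fin 5)) p)) := by
      simp [Perm.mul_apply]
    rw [h2] at h1
    calc (x : Perm (Fin 5)) ((g : Perm (Fin 5)) p)
        = (g : Perm (Fin 5)) ((g : Perm (Fin 5))⁻¹
            ((x : Perm (Fin 5)) ((g : Perm (Fin 5)) p))) := by simp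
      _ = (g : Perm (Fin 5)) p := by rw [h1]
  have hgp : (g : Perm (Fin 5)) p = p := huniq _ ⟨hgfix a haV, hgfix b hbV⟩
  -- V is characterized by p
  have hTS : ({aP, bP, aP * bP} : Finset (Perm (Fin 5))) ⊆ S p := by
    intro x hx
    simp only [Finset.mem_insert, Finset.mem_singleton] at hx
    rcases hx with h | h | h <;> subst h <;>
      refine Finset.mem_filter.mpr ⟨Finset.mem_univ _, ?_, ?_, ?_, ?_⟩
    · exact haP2
    · exact haPne
    · exact hsa
    · exact hap
    · exact hbP2
    · exact hbPne
    · exact hsb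
    · exact hbp
    · exact habP2
    · exact habPne1
    · rw [map_mul, hsa, hsb, mul_one]
    · rw [Perm.mul_apply, hbp, hap]
  have habPna : aP ≠ aP * bP := fun h => habna (Subtype.ext h.symm)
  have habPnb : bP ≠ aP * bP := fun h => habnb (Subtype.ext h.symm)
  have hTcard : ({aP, bP, aP * bP} : Finset (Perm (Fin 5))).card = 3 := by
    rw [Finset.card_insert_of_notMem (by simp [habPne, habPna]),
        Finset.card_insert_of_notMem (by simp [habPnb]), Finset.card_singleton]
  have hTeq : ({aP, bP, aP * bP} : Finset (Perm (Fin 5))) = S p :=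
    Finset.eq_of_subset_of_card_le hTS (by rw [lem5, hTcard])
  have hchar : ∀ x : alternatingGroup (Fin 5),
      x ∈ V ↔ (x = 1 ∨ (x : Perm (Fin 5)) ∈ S p) := by
    intro x
    constructor
    · intro hx
      rcases hclass x hx with h | h | h | h
      · exact Or.inl h
      · refine Or.inr ?_
        rw [← hTeq, h]
        exact Finset.mem_insert_self _ _
      · refine Or.inr ?_
        rw [← hTeq, h]
        exact Finset.mem_insert_of_mem (Finset.mem_insert_self _ _)
      · refine Or.inr ?_
        rw [← hTeq, h, hcoe_mul]
        exact Finset.mem_insert_of_mem (Finset.mem_insert_of_mem (Finset.mem_singleton_self _))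
    · rintro (h | h)
      · rw [h]; exact V.one_mem
      · rw [← hTeq] at h
        simp only [Finset.mem_insert, Finset.mem_singleton] at h
        rcases h with h | h | h
        · rw [show x = a from Subtype.ext h]; exact haV
        · rw [show x = b from Subtype.ext h]; exact hbV
        · rw [show x = a * b from Subtype.ext (h.trans hcoe_mul.symm)]; exact habV
  -- H is generated by g and V
  have hVH : V ≤ H := fun x hx => hx.1
  have hKH : Subgroup.zpowers g ⊔ V ≤ H := sup_le (Subgroup.zpowers_le.mpr hgH) hVH
  have hcardH : Nat.card H = 12 := by
    rw [Nat.card_congr e.toEquiv, Nat.card_eq_fintype_card, lemA4]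
  have h3dvd : 3 ∣ Nat.card (Subgroup.zpowers g ⊔ V : Subgroup (alternatingGroup (Fin 5))) := by
    have h := Subgroup.card_dvd_of_le (le_sup_left : Subgroup.zpowers g ≤ Subgroup.zpowers g ⊔ V)
    rwa [Nat.card_zpowers, hg] at h
  have h4dvd : 4 ∣ Nat.card (Subgroup.zpowers g ⊔ V : Subgroup (alternatingGroup (Fin 5))) := by
    have h := Subgroup.card_dvd_of_le (le_sup_right : V ≤ Subgroup.zpowers g ⊔ V)
    rwa [hcardV] at h
  have h12dvd : 12 ∣ Nat.card (Subgroup.zpowers g ⊔ V : Subgroup (alternatingGroup (Fin 5))) :=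
    Nat.Coprime.mul_dvd_of_dvd_of_dvd (by norm_num) h3dvd h4dvd
  have hdvd12 : Nat.card (Subgroup.zpowers g ⊔ V : Subgroup (alternatingGroup (Fin 5))) ∣ 12 :=
    hcardH ▸ Subgroup.card_dvd_of_le hKH
  have hKcard : Nat.card (Subgroup.zpowers g ⊔ V : Subgroup (alternatingGroup (Fin 5))) = 12 :=
    Nat.dvd_antisymm hdvd12 h12dvd
  exact ⟨p, V, hgp, hchar,
    (Subgroup.eq_of_le_of_card_ge hKH (by rw [hcardH, hKcard])).symm⟩

/-- No element of order 3 in `A₅` lies in three distinct subgroups isomorphic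
to `A₄`: if `g` has order 3 and `H₁, H₂, H₃` are subgroups of `A₅`, each
isomorphic to `A₄` and each containing `g`, then two of them coincide. -/
theorem A5_order_three_in_two_A4_subgroups
    (g : alternatingGroup (Fin 5)) (hg : orderOf g = 3)
    (H₁ H₂ H₃ : Subgroup (alternatingGroup (Fin 5)))
    (h₁ : Nonempty (H₁ ≃* alternatingGroup (Fin 4)))
    (h₂ : Nonempty (H₂ ≃* alternatingGroup (Fin 4)))
    (h₃ : Nonempty (H₃ ≃* alternatingGroup (Fin 4)))
    (hg₁ : g ∈ H₁) (hg₂ : g ∈ H₂) (hg₃ : g ∈ H₃) :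
    H₁ = H₂ ∨ H₁ = H₃ ∨ H₂ = H₃ := by
  obtain ⟨e₁⟩ := h₁
  obtain ⟨e₂⟩ := h₂
  obtain ⟨e₃⟩ := h₃
  obtain ⟨p₁, V₁, hgp₁, hV₁, hH₁⟩ := keyAux g hg H₁ e₁ hg₁
  obtain ⟨p₂, V₂, hgp₂, hV₂, hH₂⟩ := keyAux g hg H₂ e₂ hg₂
  obtain ⟨p₃, V₃, hgp₃, hV₃, hH₃⟩ := keyAux g hg H₃ e₃ hg₃
  have key : ∀ (p : Fin 5) (V V' : Subgroup (alternatingGroup (Fin 5))),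
      (∀ x, x ∈ V ↔ (x = 1 ∨ (x : Perm (Fin 5)) ∈ S p)) →
      (∀ x, x ∈ V' ↔ (x = 1 ∨ (x : Perm (Fin 5)) ∈ S p)) → V = V' := by
    intro p V V' h h'
    ext x
    rw [h, h']
  by_cases h12 : p₁ = p₂
  · subst h12
    left
    rw [hH₁, hH₂, key p₁ V₁ V₂ hV₁ hV₂]
  by_cases h13 : p₁ = p₃
  · subst h13
    right; left
    rw [hH₁, hH₃, key p₁ V₁ V₃ hV₁ hV₃]
  by_cases h23 : p₂ = p₃
  · subst h23
    right; right
    rw [hH₂, hH₃, key p₂ V₂ V₃ hV₂ hV₃]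
  · exfalso
    have hg3 : (g : Perm (Fin 5))^3 = 1 := by
      have := pow_orderOf_eq_one g
      rw [hg] at this
      simpa using congrArg Subtype.val this
    have hgne : (g : Perm (Fin 5)) ≠ 1 := by
      intro h
      have : g = 1 := by
        ext1; simpa using h
      rw [this, orderOf_one] at hg
      norm_num at hg
    exact lem3 _ hg3 hgne p₁ p₂ p₃ h12 h13 h23 hgp₁ hgp₂ hgp₃
end
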